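/- arXiv:1812.08291 — 5 statements merged into one kernel-verified Lean document; each statement's English description precedes it below -/
import Mathlib

section
/- Let Ω ⊆ ℂ be an open set with [a,b] ⊆ Ω (a < b real), and let z ∈ ℂ \ [a,b]. Let V : Ω × Ω → B(𝔥) be continuous, such that for each fixed μ ∈ Ω the map λ ↦ V(λ,μ) is holomorphic (complex differentiable) on Ω, and for each fixed λ ∈ Ω the map μ ↦ V(λ,μ) is holomorphic on Ω. Suppose T : Ω × Ω → B(𝔥) is continuous and satisfies, for all λ, μ ∈ Ω, both Lippmann–Schwinger equations T(λ,μ) = V(λ,μ) − ∫_a^b (ν − z)⁻¹ • (V(λ,ν) ∘ T(ν,μ)) dν and T(λ,μ) = V(λ,μ) − ∫_a^b (ν − z)⁻¹ • (T(λ,ν) ∘ V(ν,μ)) dν. Then for each fixed μ ∈ Ω the map λ ↦ T(λ,μ) is holomorphic on Ω, and for each fixed λ ∈ Ω the map μ ↦ T(λ,μ) is holomorphic on Ω. -/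
/-!
Each Lippmann–Schwinger equation writes `T`, as a function of one argument with the other fixed,
as `V` minus an integral over `[a, b]` of an integrand that is jointly continuous and holomorphic in
that argument. Such parametric integrals are holomorphic: one differentiates under the integral
sign, the derivatives of the integrand being bounded uniformly near each point by Cauchy's estimate,
since the integrand is bounded on a compact neighbourhood times `[a, b]`.
-/

open MeasureTheory Set ContinuousLinearMap

open Metric Filter Topology
open scoped Interval

theorem aestronglyMeasurable_deriv_of_eventually_aestronglyMeasurable
    {α : Type*} [MeasurableSpace α] {μ : Measure α}
    {𝕜 : Type*} [NontriviallyNormedField 𝕜] {E : Type*} [NormedAddCommGroup E] [NormedSpace 𝕜 E]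
    {F : 𝕜 → α → E} {x₀ : 𝕜} (hF : ∀ᶠ x in 𝓝 x₀, AEStronglyMeasurable (F x) μ)
    (hd : ∀ᵐ t ∂μ, DifferentiableAt 𝕜 (F · t) x₀) :
    AEStronglyMeasurable (fun t => deriv (F · t) x₀) μ := by
  obtain ⟨v, hv_lim, hv_meas⟩ :
      ∃ v : ℕ → 𝕜, Tendsto v atTop (𝓝[≠] x₀) ∧ ∀ n, AEStronglyMeasurable (F (v n)) μ := by
    obtain ⟨w, hw⟩ := (𝓝[≠] x₀).exists_seq_tendsto
    obtain ⟨N, hN⟩ := eventually_atTop.1 (hw.eventually (nhdsWithin_le_nhds hF))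
    exact ⟨fun n => w (n + N), hw.comp (tendsto_add_atTop_nat N),
      fun n => hN _ (Nat.le_add_left N n)⟩
  refine aestronglyMeasurable_of_tendsto_ae atTop
    (f := fun n t => slope (F · t) x₀ (v n)) (fun n => ?_) ?_
  · simp only [slope_def_module]
    exact ((hv_meas n).sub hF.self_of_nhds).const_smul _
  · filter_upwards [hd] with t ht
    exact (hasDerivAt_iff_tendsto_slope.1 ht.hasDerivAt).comp hv_lim

theorem differentiableOn_intervalIntegral_of_continuousOn
    {E : Type*} [NormedAddCommGroup E] [NormedSpace ℂ E] {a b : ℝ} {Ω : Set ℂ} (hΩ : IsOpen Ω)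
    {F : ℂ → ℝ → E} (hF_cont : ContinuousOn (Function.uncurry F) (Ω ×ˢ [[a, b]]))
    (hF_diff : ∀ t ∈ [[a, b]], DifferentiableOn ℂ (F · t) Ω) :
    DifferentiableOn ℂ (fun x => ∫ t in a..b, F x t) Ω := by
  intro x₀ hx₀
  obtain ⟨R, hR, hRΩ⟩ := nhds_basis_closedBall.mem_iff.1 (hΩ.mem_nhds hx₀)
  obtain ⟨M, hM⟩ := ((isCompact_closedBall x₀ R).prod isCompact_uIcc).exists_bound_of_continuousOn
    (hF_cont.mono (prod_mono hRΩ subset_rfl))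
  have hslice_cont : ∀ x ∈ Ω, ContinuousOn (F x) [[a, b]] := fun x hx =>
    hF_cont.comp (Continuous.prodMk_right x).continuousOn fun t ht => ⟨hx, ht⟩
  have hslice_meas : ∀ x ∈ Ω, AEStronglyMeasurable (F x) (volume.restrict (Ι a b)) :=
    fun x hx => ((hslice_cont x hx).mono uIoc_subset_uIcc).aestronglyMeasurable measurableSet_uIoc
  have hderiv : ∀ t ∈ Ι a b, ∀ x ∈ Ω, HasDerivAt (F · t) (deriv (F · t) x) x := fun t ht x hx =>
    ((hF_diff t (uIoc_subset_uIcc ht)).differentiableAt (hΩ.mem_nhds hx)).hasDerivAt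
  have hderiv_bound : ∀ t ∈ Ι a b, ∀ x ∈ ball x₀ (R / 2), ‖deriv (F · t) x‖ ≤ M / (R / 2) := by
    intro t ht x hx
    have hsub : closedBall x (R / 2) ⊆ closedBall x₀ R :=
      closedBall_subset_closedBall' (by linarith [mem_ball.1 hx])
    refine Complex.norm_deriv_le_of_forall_mem_sphere_norm_le (by positivity) ?_ fun w hw =>
      hM (w, t) ⟨hsub (sphere_subset_closedBall hw), uIoc_subset_uIcc ht⟩
    exact ((hF_diff t (uIoc_subset_uIcc ht)).mono
      (closure_ball_subset_closedBall.trans (hsub.trans hRΩ))).diffContOnCl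
  have hball : ball x₀ (R / 2) ⊆ Ω := ball_subset_closedBall.trans
    ((closedBall_subset_closedBall (by linarith)).trans hRΩ)
  have hslice_meas_nhds := eventually_of_mem (hΩ.mem_nhds hx₀) hslice_meas
  have hderiv_meas : AEStronglyMeasurable (fun t => deriv (F · t) x₀) (volume.restrict (Ι a b)) :=
    aestronglyMeasurable_deriv_of_eventually_aestronglyMeasurable hslice_meas_nhds
      ((ae_restrict_iff' measurableSet_uIoc).2
        (.of_forall fun t ht => (hderiv t ht x₀ hx₀).differentiableAt))
  exact (intervalIntegral.hasDerivAt_integral_of_dominated_loc_of_deriv_le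
    (F' := fun x t => deriv (F · t) x) (ball_mem_nhds x₀ (by positivity)) hslice_meas_nhds
    (hslice_cont x₀ hx₀).intervalIntegrable hderiv_meas
    (.of_forall fun t ht x hx => hderiv_bound t ht x hx) intervalIntegrable_const
    (.of_forall fun t ht x hx => hderiv t ht x (hball hx))).2
    |>.differentiableAt.differentiableWithinAt

theorem transition_kernel_holomorphic_general
    {𝕙 : Type*} [NormedAddCommGroup 𝕙] [InnerProductSpace ℂ 𝕙]
    (a b : ℝ) (hab : a < b)
    (Ω : Set ℂ) (hΩopen : IsOpen Ω)
    (hΩsub : ∀ x : ℝ, x ∈ Set.Icc a b → (x : ℂ) ∈ Ω)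
    (z : ℂ) (hz : z ∉ (fun x : ℝ => (x : ℂ)) '' Set.Icc a b)
    (V T : ℂ → ℂ → (𝕙 →L[ℂ] 𝕙))
    (hVcont : ContinuousOn (fun p : ℂ × ℂ => V p.1 p.2) (Ω ×ˢ Ω))
    (hVhol₁ : ∀ μ ∈ Ω, DifferentiableOn ℂ (fun lam => V lam μ) Ω)
    (hVhol₂ : ∀ lam ∈ Ω, DifferentiableOn ℂ (fun μ => V lam μ) Ω)
    (hTcont : ContinuousOn (fun p : ℂ × ℂ => T p.1 p.2) (Ω ×ˢ Ω))
    (hLS₁ : ∀ lam ∈ Ω, ∀ μ ∈ Ω,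
      T lam μ = V lam μ - ∫ ν in a..b, ((ν : ℂ) - z)⁻¹ • (V lam (↑ν) ∘L T (↑ν) μ))
    (hLS₂ : ∀ lam ∈ Ω, ∀ μ ∈ Ω,
      T lam μ = V lam μ - ∫ ν in a..b, ((ν : ℂ) - z)⁻¹ • (T lam (↑ν) ∘L V (↑ν) μ)) :
    (∀ μ ∈ Ω, DifferentiableOn ℂ (fun lam => T lam μ) Ω) ∧
    (∀ lam ∈ Ω, DifferentiableOn ℂ (fun μ => T lam μ) Ω) := by
  rw [← uIcc_of_le hab.le] at hΩsub hz
  have hres : ContinuousOn (fun p : ℂ × ℝ => ((p.2 : ℂ) - z)⁻¹) (Ω ×ˢ [[a, b]]) :=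
    (Complex.continuous_ofReal.comp continuous_snd |>.sub continuous_const).continuousOn.inv₀
      fun p hp hzero => hz ⟨p.2, hp.2, sub_eq_zero.1 hzero⟩
  have hVT : ∀ μ ∈ Ω, ContinuousOn (fun p : ℂ × ℝ => V p.1 p.2 ∘L T p.2 μ) (Ω ×ˢ [[a, b]]) :=
    fun μ hμ => (hVcont.comp (f := fun p : ℂ × ℝ => (p.1, (p.2 : ℂ))) (by fun_prop)
      fun p hp => ⟨hp.1, hΩsub p.2 hp.2⟩).clm_comp
      (hTcont.comp (f := fun p : ℂ × ℝ => ((p.2 : ℂ), μ)) (by fun_prop)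
        fun p hp => ⟨hΩsub p.2 hp.2, hμ⟩)
  have hTV : ∀ lam ∈ Ω, ContinuousOn (fun p : ℂ × ℝ => T lam p.2 ∘L V p.2 p.1) (Ω ×ˢ [[a, b]]) :=
    fun lam hlam => (hTcont.comp (f := fun p : ℂ × ℝ => (lam, (p.2 : ℂ))) (by fun_prop)
      fun p hp => ⟨hlam, hΩsub p.2 hp.2⟩).clm_comp
      (hVcont.comp (f := fun p : ℂ × ℝ => ((p.2 : ℂ), p.1)) (by fun_prop)
        fun p hp => ⟨hΩsub p.2 hp.2, hp.1⟩)
  constructor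
  · intro μ hμ
    refine DifferentiableOn.congr ((hVhol₁ μ hμ).sub ?_) fun lam hlam => hLS₁ lam hlam μ hμ
    exact differentiableOn_intervalIntegral_of_continuousOn hΩopen (hres.smul (hVT μ hμ))
      fun t ht => ((hVhol₁ t (hΩsub t ht)).clm_comp (differentiableOn_const _)).fun_const_smul _
  · intro lam hlam
    refine DifferentiableOn.congr ((hVhol₂ lam hlam).sub ?_) fun μ hμ => hLS₂ lam hlam μ hμ
    exact differentiableOn_intervalIntegral_of_continuousOn hΩopen (hres.smul (hTV lam hlam))
      fun t ht => ((differentiableOn_const _).clm_comp (hVhol₂ t (hΩsub t ht))).fun_const_smul _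

/-- Proposition 1 (first assertion): if the potential kernel `V(λ,μ)` is holomorphic in both
arguments on `Ω ⊇ [a,b]` and the kernel `T(λ,μ) = T(λ,μ,z)` satisfies both Lippmann–Schwinger
equations, then `T` is holomorphic in both arguments on `Ω`. -/
theorem transition_kernel_holomorphic
    {𝕙 : Type*} [NormedAddCommGroup 𝕙] [InnerProductSpace ℂ 𝕙] [CompleteSpace 𝕙]
    (a b : ℝ) (hab : a < b)
    (Ω : Set ℂ) (hΩopen : IsOpen Ω)
    (hΩsub : ∀ x : ℝ, x ∈ Set.Icc a b → (x : ℂ) ∈ Ω)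
    (z : ℂ) (hz : z ∉ (fun x : ℝ => (x : ℂ)) '' Set.Icc a b)
    (V T : ℂ → ℂ → (𝕙 →L[ℂ] 𝕙))
    (hVcont : ContinuousOn (fun p : ℂ × ℂ => V p.1 p.2) (Ω ×ˢ Ω))
    (hVhol₁ : ∀ μ ∈ Ω, DifferentiableOn ℂ (fun lam => V lam μ) Ω)
    (hVhol₂ : ∀ lam ∈ Ω, DifferentiableOn ℂ (fun μ => V lam μ) Ω)
    (hTcont : ContinuousOn (fun p : ℂ × ℂ => T p.1 p.2) (Ω ×ˢ Ω))
    (hLS₁ : ∀ lam ∈ Ω, ∀ μ ∈ Ω,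
      T lam μ = V lam μ - ∫ ν in a..b, ((ν : ℂ) - z)⁻¹ • (V lam (↑ν) ∘L T (↑ν) μ))
    (hLS₂ : ∀ lam ∈ Ω, ∀ μ ∈ Ω,
      T lam μ = V lam μ - ∫ ν in a..b, ((ν : ℂ) - z)⁻¹ • (T lam (↑ν) ∘L V (↑ν) μ)) :
    (∀ μ ∈ Ω, DifferentiableOn ℂ (fun lam => T lam μ) Ω) ∧
    (∀ lam ∈ Ω, DifferentiableOn ℂ (fun μ => T lam μ) Ω) :=
  transition_kernel_holomorphic_general a b hab Ω hΩopen hΩsub z hz V T hVcont hVhol₁ hVhol₂ hTcont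
    hLS₁ hLS₂
end

section
/- Let a < b be real, Ω ⊆ ℂ open with [a,b] ⊆ Ω, ℓ ∈ {1, −1}, z ∈ Ω with Im z ≠ 0, and μ ∈ Ω. Let V, T, T' : Ω × Ω → B(𝔥) be such that all the integrands below are continuous in ν on [a,b]. Assume: (i) for c = μ and for c = z, the Lippmann–Schwinger equation holds: for all λ ∈ Ω, T(λ,c) = V(λ,c) − ∫_a^b (ν − z)⁻¹ • (V(λ,ν) ∘ T(ν,c)) dν; (ii) uniqueness of the homogeneous equation: every continuous X : [a,b] → B(𝔥) satisfying X(λ) = −∫_a^b (ν − z)⁻¹ • (V(λ,ν) ∘ X(ν)) dν for all λ ∈ [a,b] is identically zero; (iii) T' satisfies the continued Lippmann–Schwinger equation: for all λ ∈ Ω, T'(λ,μ) = V(λ,μ) + 2πiℓ • (V(λ,z) ∘ T'(z,μ)) − ∫_a^b (ν − z)⁻¹ • (V(λ,ν) ∘ T'(ν,μ)) dν. Then for all λ ∈ Ω, T'(λ,μ) = T(λ,μ) + 2πiℓ • (T(λ,z) ∘ T'(z,μ)). -/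
open MeasureTheory Set ContinuousLinearMap

/-- Equation (12) of the paper: the off-shell kernel `T'` of the transition operator continued
to the unphysical sheet `Π_ℓ` is expressed through the physical-sheet kernel `T` and the
half-on-shell continued kernel `T'(z,μ)`:
`T'(λ,μ) = T(λ,μ) + 2πiℓ T(λ,z) T'(z,μ)`. -/
theorem continued_kernel_off_shell_via_half_on_shell
    {𝕙 : Type*} [NormedAddCommGroup 𝕙] [InnerProductSpace ℂ 𝕙] [CompleteSpace 𝕙]
    (a b : ℝ) (hab : a < b)
    (Ω : Set ℂ) (hΩopen : IsOpen Ω)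
    (hΩsub : ∀ x : ℝ, x ∈ Set.Icc a b → (x : ℂ) ∈ Ω)
    (ℓ : ℂ) (hℓ : ℓ = 1 ∨ ℓ = -1)
    (z : ℂ) (hzΩ : z ∈ Ω) (hzim : z.im ≠ 0)
    (μ : ℂ) (hμΩ : μ ∈ Ω)
    (V T T' : ℂ → ℂ → (𝕙 →L[ℂ] 𝕙))
    -- continuity in `ν` on `[a,b]` of all the factors appearing in the integrands below
    (hVc : ∀ lam ∈ Ω, ContinuousOn (fun ν : ℝ => V lam (↑ν)) (Set.Icc a b))
    (hTμc : ContinuousOn (fun ν : ℝ => T (↑ν) μ) (Set.Icc a b))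
    (hTzc : ContinuousOn (fun ν : ℝ => T (↑ν) z) (Set.Icc a b))
    (hT'c : ContinuousOn (fun ν : ℝ => T' (↑ν) μ) (Set.Icc a b))
    -- (i) Lippmann–Schwinger equations on the physical sheet, for `c = μ` and `c = z`
    (hLSμ : ∀ lam ∈ Ω,
      T lam μ = V lam μ - ∫ ν in a..b, ((ν : ℂ) - z)⁻¹ • (V lam (↑ν) ∘L T (↑ν) μ))
    (hLSz : ∀ lam ∈ Ω,
      T lam z = V lam z - ∫ ν in a..b, ((ν : ℂ) - z)⁻¹ • (V lam (↑ν) ∘L T (↑ν) z))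
    -- (ii) uniqueness for the homogeneous equation
    (huniq : ∀ X : ℝ → (𝕙 →L[ℂ] 𝕙), ContinuousOn X (Set.Icc a b) →
      (∀ lam ∈ Set.Icc a b,
        X lam = -∫ ν in a..b, ((ν : ℂ) - z)⁻¹ • (V (↑lam) (↑ν) ∘L X ν)) →
      ∀ lam ∈ Set.Icc a b, X lam = 0)
    -- (iii) continued Lippmann–Schwinger equation on the unphysical sheet
    (hLS' : ∀ lam ∈ Ω,
      T' lam μ = V lam μ + (2 * (Real.pi : ℂ) * Complex.I * ℓ) • (V lam z ∘L T' z μ)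
        - ∫ ν in a..b, ((ν : ℂ) - z)⁻¹ • (V lam (↑ν) ∘L T' (↑ν) μ)) :
    ∀ lam ∈ Ω,
      T' lam μ = T lam μ + (2 * (Real.pi : ℂ) * Complex.I * ℓ) • (T lam z ∘L T' z μ) := by
  set c : ℂ := 2 * (Real.pi : ℂ) * Complex.I * ℓ with hc
  set K : 𝕙 →L[ℂ] 𝕙 := T' z μ with hK
  have hw0 : ∀ ν : ℝ, ((ν : ℂ) - z) ≠ 0 := by
    intro ν h
    rw [sub_eq_zero] at h
    exact hzim (by rw [← h]; simp)
  have hwc : Continuous fun ν : ℝ => ((ν : ℂ) - z)⁻¹ :=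
    (Complex.continuous_ofReal.sub continuous_const).inv₀ hw0
  set L : (𝕙 →L[ℂ] 𝕙) →L[ℂ] (𝕙 →L[ℂ] 𝕙) := (ContinuousLinearMap.compL ℂ 𝕙 𝕙 𝕙).flip K with hL
  have hLapp : ∀ A : 𝕙 →L[ℂ] 𝕙, L A = A ∘L K := fun A => rfl
  have hI : ∀ lam ∈ Ω, ∀ F : ℝ → (𝕙 →L[ℂ] 𝕙), ContinuousOn F (Set.Icc a b) →
      IntervalIntegrable (fun ν : ℝ => ((ν : ℂ) - z)⁻¹ • (V lam (↑ν) ∘L F ν))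
        MeasureTheory.volume a b := by
    intro lam hlam F hF
    apply ContinuousOn.intervalIntegrable
    rw [Set.uIcc_of_le hab.le]
    exact hwc.continuousOn.smul ((hVc lam hlam).clm_comp hF)
  set X : ℝ → (𝕙 →L[ℂ] 𝕙) :=
    fun ν => T' (↑ν) μ - T (↑ν) μ - c • (T (↑ν) z ∘L K) with hX
  have hXc : ContinuousOn X (Set.Icc a b) :=
    (hT'c.sub hTμc).sub ((hTzc.clm_comp continuousOn_const).const_smul c)
  have key : ∀ lam ∈ Set.Icc a b,
      X lam = -∫ ν in a..b, ((ν : ℂ) - z)⁻¹ • (V (↑lam) (↑ν) ∘L X ν) := by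
    intro lam hlam
    have hlamΩ := hΩsub lam hlam
    have I1 := hI _ hlamΩ _ hTμc
    have I2 := hI _ hlamΩ _ hTzc
    have I3 := hI _ hlamΩ _ hT'c
    have hrw : (fun ν : ℝ => ((ν : ℂ) - z)⁻¹ • (V (↑lam) (↑ν) ∘L X ν))
        = fun ν : ℝ => (((ν : ℂ) - z)⁻¹ • (V (↑lam) (↑ν) ∘L T' (↑ν) μ))
            - (((ν : ℂ) - z)⁻¹ • (V (↑lam) (↑ν) ∘L T (↑ν) μ))
            - c • (L (((ν : ℂ) - z)⁻¹ • (V (↑lam) (↑ν) ∘L T (↑ν) z))) := by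
      funext ν
      simp only [hX, hLapp, ContinuousLinearMap.comp_sub, ContinuousLinearMap.comp_smul,
        ContinuousLinearMap.smul_comp, ← ContinuousLinearMap.comp_assoc, smul_sub]
      module
    have I2' : IntervalIntegrable (fun ν : ℝ =>
        L (((ν : ℂ) - z)⁻¹ • (V (↑lam) (↑ν) ∘L T (↑ν) z))) MeasureTheory.volume a b := by
      apply ContinuousOn.intervalIntegrable
      rw [Set.uIcc_of_le hab.le]
      exact L.continuous.comp_continuousOn
        (hwc.continuousOn.smul ((hVc _ hlamΩ).clm_comp hTzc))
    have I2c : IntervalIntegrable (fun ν : ℝ =>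
        c • L (((ν : ℂ) - z)⁻¹ • (V (↑lam) (↑ν) ∘L T (↑ν) z))) MeasureTheory.volume a b := by
      simpa [Pi.smul_def] using I2'.smul c
    rw [hrw, intervalIntegral.integral_sub (I3.sub I1) I2c,
      intervalIntegral.integral_sub I3 I1, intervalIntegral.integral_smul,
      L.intervalIntegral_comp_comm I2]
    have e1 := hLS' _ hlamΩ
    have e2 := hLSμ _ hlamΩ
    have e3 := hLSz _ hlamΩ
    show T' (↑lam) μ - T (↑lam) μ - c • (T (↑lam) z ∘L K) = _
    rw [e1, e2, e3, hLapp]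
    simp only [ContinuousLinearMap.sub_comp]
    module
  have hzero := huniq X hXc key
  intro lam hlam
  have hT'eq : ∀ ν ∈ Set.Icc a b, T' (↑ν) μ = T (↑ν) μ + c • (T (↑ν) z ∘L K) := by
    intro ν hν
    have := hzero ν hν
    rw [hX] at this
    have h := sub_eq_zero.mp (by simpa [sub_sub] using this)
    linear_combination (norm := module) h
  have I1 := hI _ hlam _ hTμc
  have I2 := hI _ hlam _ hTzc
  have I2' : IntervalIntegrable (fun ν : ℝ =>
      L (((ν : ℂ) - z)⁻¹ • (V lam (↑ν) ∘L T (↑ν) z))) MeasureTheory.volume a b := by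
    apply ContinuousOn.intervalIntegrable
    rw [Set.uIcc_of_le hab.le]
    exact L.continuous.comp_continuousOn
      (hwc.continuousOn.smul ((hVc _ hlam).clm_comp hTzc))
  have hcong : (∫ ν in a..b, ((ν : ℂ) - z)⁻¹ • (V lam (↑ν) ∘L T' (↑ν) μ))
      = ∫ ν in a..b, ((((ν : ℂ) - z)⁻¹ • (V lam (↑ν) ∘L T (↑ν) μ))
          + c • (L (((ν : ℂ) - z)⁻¹ • (V lam (↑ν) ∘L T (↑ν) z)))) := by
    apply intervalIntegral.integral_congr
    intro ν hν
    rw [Set.uIcc_of_le hab.le] at hν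
    dsimp only
    rw [hT'eq ν hν]
    simp only [hLapp, ContinuousLinearMap.comp_add, ContinuousLinearMap.comp_smul,
      ContinuousLinearMap.smul_comp, ← ContinuousLinearMap.comp_assoc, smul_add]
    module
  have e1 := hLS' _ hlam
  have e2 := hLSμ _ hlam
  have e3 := hLSz _ hlam
  have I2c : IntervalIntegrable (fun ν : ℝ =>
      c • L (((ν : ℂ) - z)⁻¹ • (V lam (↑ν) ∘L T (↑ν) z))) MeasureTheory.volume a b := by
    simpa [Pi.smul_def] using I2'.smul c
  rw [e1, hcong, intervalIntegral.integral_add I1 I2c,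
    intervalIntegral.integral_smul, L.intervalIntegral_comp_comm I2, e2, e3, hLapp]
  simp only [ContinuousLinearMap.sub_comp]
  module
end

section
/- Under the following hypotheses, with S_ℓ := I − 2πiℓ • T(z,z): (i) for c = μ and for c = z, for all λ ∈ Ω, T(λ,c) = V(λ,c) − ∫_a^b (ν − z)⁻¹ • (V(λ,ν) ∘ T(ν,c)) dν; (ii) every continuous X : [a,b] → B(𝔥) satisfying X(λ) = −∫_a^b (ν − z)⁻¹ • (V(λ,ν) ∘ X(ν)) dν for all λ ∈ [a,b] is identically zero; (iii) for all λ ∈ Ω, T'(λ,μ) = V(λ,μ) + 2πiℓ • (V(λ,z) ∘ T'(z,μ)) − ∫_a^b (ν − z)⁻¹ • (V(λ,ν) ∘ T'(ν,μ)) dν; it follows that S_ℓ ∘ T'(z,μ) = T(z,μ), and if moreover S_ℓ is boundedly invertible then T'(z,μ) = S_ℓ⁻¹ ∘ T(z,μ). -/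
open MeasureTheory Set ContinuousLinearMap

/-- Equations (13) and (14) of the paper: with `S_ℓ = I - 2πiℓ T(z,z)` the physical-sheet
scattering matrix, the half-on-shell continued kernel satisfies `S_ℓ T'(z,μ) = T(z,μ)`, and if
`S_ℓ` is boundedly invertible then `T'(z,μ) = S_ℓ⁻¹ T(z,μ)`. -/
theorem scattering_matrix_times_half_on_shell
    {𝕙 : Type*} [NormedAddCommGroup 𝕙] [InnerProductSpace ℂ 𝕙] [CompleteSpace 𝕙]
    (a b : ℝ) (hab : a < b)
    (Ω : Set ℂ) (hΩopen : IsOpen Ω)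
    (hΩsub : ∀ x : ℝ, x ∈ Set.Icc a b → (x : ℂ) ∈ Ω)
    (ℓ : ℂ) (hℓ : ℓ = 1 ∨ ℓ = -1)
    (z : ℂ) (hzΩ : z ∈ Ω) (hzim : z.im ≠ 0)
    (μ : ℂ) (hμΩ : μ ∈ Ω)
    (V T T' : ℂ → ℂ → (𝕙 →L[ℂ] 𝕙))
    -- continuity in `ν` on `[a,b]` of all the factors appearing in the integrands below
    (hVc : ∀ lam ∈ Ω, ContinuousOn (fun ν : ℝ => V lam (↑ν)) (Set.Icc a b))
    (hTμc : ContinuousOn (fun ν : ℝ => T (↑ν) μ) (Set.Icc a b))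
    (hTzc : ContinuousOn (fun ν : ℝ => T (↑ν) z) (Set.Icc a b))
    (hT'c : ContinuousOn (fun ν : ℝ => T' (↑ν) μ) (Set.Icc a b))
    -- (i) Lippmann–Schwinger equations on the physical sheet, for `c = μ` and `c = z`
    (hLSμ : ∀ lam ∈ Ω,
      T lam μ = V lam μ - ∫ ν in a..b, ((ν : ℂ) - z)⁻¹ • (V lam (↑ν) ∘L T (↑ν) μ))
    (hLSz : ∀ lam ∈ Ω,
      T lam z = V lam z - ∫ ν in a..b, ((ν : ℂ) - z)⁻¹ • (V lam (↑ν) ∘L T (↑ν) z))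
    -- (ii) uniqueness for the homogeneous equation
    (huniq : ∀ X : ℝ → (𝕙 →L[ℂ] 𝕙), ContinuousOn X (Set.Icc a b) →
      (∀ lam ∈ Set.Icc a b,
        X lam = -∫ ν in a..b, ((ν : ℂ) - z)⁻¹ • (V (↑lam) (↑ν) ∘L X ν)) →
      ∀ lam ∈ Set.Icc a b, X lam = 0)
    -- (iii) continued Lippmann–Schwinger equation on the unphysical sheet
    (hLS' : ∀ lam ∈ Ω,
      T' lam μ = V lam μ + (2 * (Real.pi : ℂ) * Complex.I * ℓ) • (V lam z ∘L T' z μ)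
        - ∫ ν in a..b, ((ν : ℂ) - z)⁻¹ • (V lam (↑ν) ∘L T' (↑ν) μ)) :
    ((1 : 𝕙 →L[ℂ] 𝕙) - (2 * (Real.pi : ℂ) * Complex.I * ℓ) • T z z) ∘L T' z μ = T z μ ∧
    (∀ Sinv : 𝕙 →L[ℂ] 𝕙,
      Sinv * ((1 : 𝕙 →L[ℂ] 𝕙) - (2 * (Real.pi : ℂ) * Complex.I * ℓ) • T z z) = 1 →
      ((1 : 𝕙 →L[ℂ] 𝕙) - (2 * (Real.pi : ℂ) * Complex.I * ℓ) • T z z) * Sinv = 1 →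
      T' z μ = Sinv ∘L T z μ) := by
  set c : ℂ := 2 * (Real.pi : ℂ) * Complex.I * ℓ with hc
  set A : 𝕙 →L[ℂ] 𝕙 := T' z μ with hA
  -- auxiliary continuity and integrability facts
  have hres : ∀ ν : ℝ, ((ν : ℂ) - z) ≠ 0 := by
    intro ν h
    apply hzim
    have := congrArg Complex.im h
    simpa using this.symm
  have hresc : ContinuousOn (fun ν : ℝ => ((ν : ℂ) - z)⁻¹) (Set.Icc a b) := by
    apply ContinuousOn.inv₀
    · exact (Complex.continuous_ofReal.sub continuous_const).continuousOn
    · intro ν _; exact hres ν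
  have huIcc : Set.uIcc a b = Set.Icc a b := Set.uIcc_of_le hab.le
  have hInt : ∀ (lam : ℂ), lam ∈ Ω → ∀ (g : ℝ → (𝕙 →L[ℂ] 𝕙)),
      ContinuousOn g (Set.Icc a b) →
      IntervalIntegrable (fun ν : ℝ => ((ν : ℂ) - z)⁻¹ • (V lam (↑ν) ∘L g ν))
        MeasureTheory.volume a b := by
    intro lam hlam g hg
    apply ContinuousOn.intervalIntegrable
    rw [huIcc]
    exact hresc.smul ((hVc lam hlam).clm_comp hg)
  have hXc : ContinuousOn
      (fun ν : ℝ => T' (↑ν) μ - T (↑ν) μ - c • (T (↑ν) z ∘L A)) (Set.Icc a b) := by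
    apply (hT'c.sub hTμc).sub
    exact ((hTzc.clm_comp continuousOn_const)).const_smul c
  -- the combination X satisfies the homogeneous equation on Ω
  have hXeq : ∀ lam ∈ Ω,
      T' lam μ - T lam μ - c • (T lam z ∘L A)
        = -∫ ν in a..b, ((ν : ℂ) - z)⁻¹ •
            (V lam (↑ν) ∘L (T' (↑ν) μ - T (↑ν) μ - c • (T (↑ν) z ∘L A))) := by
    intro lam hlam
    have hI1 := hInt lam hlam _ hT'c
    have hI2 := hInt lam hlam _ hTμc
    have hI3 := hInt lam hlam _ hTzc
    have hI3' : IntervalIntegrable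
        (fun ν : ℝ => ((ν : ℂ) - z)⁻¹ • (V lam (↑ν) ∘L (T (↑ν) z ∘L A)))
        MeasureTheory.volume a b := by
      apply ContinuousOn.intervalIntegrable
      rw [huIcc]
      exact hresc.smul ((hVc lam hlam).clm_comp (hTzc.clm_comp continuousOn_const))
    -- compose LS equation for `T · z` with `A` on the right
    have hcompA : (∫ ν in a..b, ((ν : ℂ) - z)⁻¹ • (V lam (↑ν) ∘L T (↑ν) z)) ∘L A
        = ∫ ν in a..b, ((ν : ℂ) - z)⁻¹ • (V lam (↑ν) ∘L (T (↑ν) z ∘L A)) := by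
      have := ((ContinuousLinearMap.compL ℂ 𝕙 𝕙 𝕙).flip A).intervalIntegral_comp_comm hI3
      simpa [ContinuousLinearMap.compL_apply, ContinuousLinearMap.comp_assoc,
        smul_comp] using this.symm
    have hTz : T lam z ∘L A = V lam z ∘L A
        - ∫ ν in a..b, ((ν : ℂ) - z)⁻¹ • (V lam (↑ν) ∘L (T (↑ν) z ∘L A)) := by
      rw [hLSz lam hlam, ContinuousLinearMap.sub_comp, hcompA]
    -- expand everything
    have hexp : ∀ ν : ℝ,
        ((ν : ℂ) - z)⁻¹ • (V lam (↑ν) ∘L (T' (↑ν) μ - T (↑ν) μ - c • (T (↑ν) z ∘L A)))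
        = ((ν : ℂ) - z)⁻¹ • (V lam (↑ν) ∘L T' (↑ν) μ)
          - ((ν : ℂ) - z)⁻¹ • (V lam (↑ν) ∘L T (↑ν) μ)
          - c • (((ν : ℂ) - z)⁻¹ • (V lam (↑ν) ∘L (T (↑ν) z ∘L A))) := by
      intro ν
      rw [ContinuousLinearMap.comp_sub, ContinuousLinearMap.comp_sub,
        ContinuousLinearMap.comp_smul, smul_sub, smul_sub, smul_comm c]
    have hI4 : IntervalIntegrable
        (fun ν : ℝ => c • (((ν : ℂ) - z)⁻¹ • (V lam (↑ν) ∘L (T (↑ν) z ∘L A))))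
        MeasureTheory.volume a b := by
      apply ContinuousOn.intervalIntegrable
      rw [huIcc]
      exact (hresc.smul ((hVc lam hlam).clm_comp
        (hTzc.clm_comp continuousOn_const))).const_smul c
    rw [intervalIntegral.integral_congr (fun ν _ => hexp ν),
      intervalIntegral.integral_sub (hI1.sub hI2) hI4,
      intervalIntegral.integral_sub hI1 hI2, intervalIntegral.integral_smul]
    rw [hLS' lam hlam, hLSμ lam hlam, hTz, smul_sub]
    set J1 := ∫ ν in a..b, ((ν : ℂ) - z)⁻¹ • (V lam (↑ν) ∘L T' (↑ν) μ)
    set J2 := ∫ ν in a..b, ((ν : ℂ) - z)⁻¹ • (V lam (↑ν) ∘L T (↑ν) μ)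
    set J3 := ∫ ν in a..b, ((ν : ℂ) - z)⁻¹ • (V lam (↑ν) ∘L (T (↑ν) z ∘L A))
    abel
  -- uniqueness gives vanishing on [a,b]
  have hX0 : ∀ ν ∈ Set.Icc a b,
      T' (↑ν) μ - T (↑ν) μ - c • (T (↑ν) z ∘L A) = 0 := by
    apply huniq _ hXc
    intro lam hlam
    exact hXeq (↑lam) (hΩsub lam hlam)
  -- hence the combination vanishes at z as well
  have hXz : T' z μ - T z μ - c • (T z z ∘L A) = 0 := by
    rw [hXeq z hzΩ]
    rw [show (fun ν : ℝ => ((ν : ℂ) - z)⁻¹ •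
        (V z (↑ν) ∘L (T' (↑ν) μ - T (↑ν) μ - c • (T (↑ν) z ∘L A)))) = fun ν : ℝ =>
        ((ν : ℂ) - z)⁻¹ • (V z (↑ν) ∘L (T' (↑ν) μ - T (↑ν) μ - c • (T (↑ν) z ∘L A)))
      from rfl]
    have : ∀ ν ∈ Set.uIcc a b, ((ν : ℂ) - z)⁻¹ •
        (V z (↑ν) ∘L (T' (↑ν) μ - T (↑ν) μ - c • (T (↑ν) z ∘L A))) = 0 := by
      intro ν hν
      rw [huIcc] at hν
      rw [hX0 ν hν]
      simp
    rw [intervalIntegral.integral_congr this]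
    simp
  have hmain : ((1 : 𝕙 →L[ℂ] 𝕙) - c • T z z) ∘L A = T z μ := by
    have h1 : T' z μ - c • (T z z ∘L A) = T z μ := by
      have := sub_eq_zero.mp hXz
      linear_combination (norm := abel) this
    calc ((1 : 𝕙 →L[ℂ] 𝕙) - c • T z z) ∘L A
        = A - c • (T z z ∘L A) := by
          rw [ContinuousLinearMap.sub_comp, ContinuousLinearMap.one_def,
            ContinuousLinearMap.id_comp, ContinuousLinearMap.smul_comp]
      _ = T z μ := h1
  refine ⟨hmain, ?_⟩
  intro Sinv hleft _
  calc T' z μ = (Sinv * ((1 : 𝕙 →L[ℂ] 𝕙) - c • T z z)) ∘L A := by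
        rw [hleft]; rfl
    _ = Sinv ∘L (((1 : 𝕙 →L[ℂ] 𝕙) - c • T z z) ∘L A) := by
        rw [ContinuousLinearMap.mul_def, ContinuousLinearMap.comp_assoc]
    _ = Sinv ∘L T z μ := by rw [hmain]
end

section
/- Under the following hypotheses, with S_ℓ := I − 2πiℓ • T(z,z) assumed boundedly invertible: (i) for c = μ and for c = z, for all λ ∈ Ω, T(λ,c) = V(λ,c) − ∫_a^b (ν − z)⁻¹ • (V(λ,ν) ∘ T(ν,c)) dν; (ii) every continuous X : [a,b] → B(𝔥) satisfying X(λ) = −∫_a^b (ν − z)⁻¹ • (V(λ,ν) ∘ X(ν)) dν for all λ ∈ [a,b] is identically zero; (iii) for all λ ∈ Ω, T'(λ,μ) = V(λ,μ) + 2πiℓ • (V(λ,z) ∘ T'(z,μ)) − ∫_a^b (ν − z)⁻¹ • (V(λ,ν) ∘ T'(ν,μ)) dν; it follows that for all λ ∈ Ω, T'(λ,μ) = T(λ,μ) + 2πiℓ • (T(λ,z) ∘ S_ℓ⁻¹ ∘ T(z,μ)). -/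
/-!
Put `c = 2πiℓ` and `K = T'(z,μ)`. Subtracting the physical-sheet equations (i) for `T(·,μ)` and
`c • T(·,z) ∘ K` from the continued equation (iii), the source terms cancel and the residual
`X(λ) = T'(λ,μ) - T(λ,μ) - c • T(λ,z) ∘ K` solves the homogeneous equation, so it vanishes on
`[a,b]` by (ii), and then on all of `Ω` because the equation expresses `X(λ)` through its values
on `[a,b]`. At `λ = z` this reads `S_ℓ K = T(z,μ)`, i.e. `K = S_ℓ⁻¹ T(z,μ)`.
-/

open MeasureTheory Set ContinuousLinearMap

theorem continuous_inv_ofReal_sub {z : ℂ} (hz : z.im ≠ 0) :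
    Continuous fun ν : ℝ => ((ν : ℂ) - z)⁻¹ :=
  (Complex.continuous_ofReal.sub continuous_const).inv₀ fun ν h =>
    hz (by simpa using congrArg Complex.im (sub_eq_zero.1 h).symm)

theorem eq_mul_of_eq_add_mul_of_mul_one_sub_eq_one {R : Type*} [Ring R] {s t k m : R}
    (hs : s * (1 - t) = 1) (hk : k = m + t * k) : k = s * m := by
  calc k = s * (1 - t) * k := by rw [hs, one_mul]
    _ = s * m := by rw [mul_assoc, sub_mul, one_mul, sub_eq_of_eq_add hk]

section IntegralOperator

variable {E : Type*} [NormedAddCommGroup E] [NormedSpace ℂ E] {a b : ℝ} {k : ℝ → ℂ}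
  {W F G H : ℝ → E →L[ℂ] E}

theorem intervalIntegrable_smul_comp (hab : a ≤ b) (hk : ContinuousOn k (Icc a b))
    (hW : ContinuousOn W (Icc a b)) (hF : ContinuousOn F (Icc a b)) :
    IntervalIntegrable (fun ν => k ν • (W ν ∘L F ν)) volume a b :=
  ContinuousOn.intervalIntegrable (by rw [uIcc_of_le hab]; exact hk.smul (hW.clm_comp hF))

theorem integral_smul_comp_sub
    (hF : IntervalIntegrable (fun ν => k ν • (W ν ∘L F ν)) volume a b)
    (hG : IntervalIntegrable (fun ν => k ν • (W ν ∘L G ν)) volume a b) :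
    ∫ ν in a..b, k ν • (W ν ∘L (F ν - G ν))
      = (∫ ν in a..b, k ν • (W ν ∘L F ν)) - ∫ ν in a..b, k ν • (W ν ∘L G ν) := by
  rw [← intervalIntegral.integral_sub hF hG]
  simp only [comp_sub, smul_sub]

theorem integral_smul_comp_smul_comp [CompleteSpace E] (c : ℂ) (K : E →L[ℂ] E)
    (hH : IntervalIntegrable (fun ν => k ν • (W ν ∘L H ν)) volume a b) :
    ∫ ν in a..b, k ν • (W ν ∘L (c • (H ν ∘L K)))
      = c • ((∫ ν in a..b, k ν • (W ν ∘L H ν)) ∘L K) := by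
  have hcomp := ((compL ℂ E E E).flip K).intervalIntegral_comp_comm hH
  simp only [flip_apply, compL_apply] at hcomp
  rw [← hcomp, ← intervalIntegral.integral_smul]
  congr 1
  funext ν
  ext v
  simp [smul_smul, mul_comm]

theorem integral_smul_comp_eq_zero (hab : a ≤ b) (hF : EqOn F 0 (Icc a b)) :
    ∫ ν in a..b, k ν • (W ν ∘L F ν) = 0 := by
  rw [intervalIntegral.integral_congr (g := fun _ => 0)]
  · simp
  · intro ν hν
    rw [uIcc_of_le hab] at hν
    simp [hF hν]

theorem sub_sub_smul_comp_eq_neg_integral [CompleteSpace E] (hab : a ≤ b)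
    (hk : ContinuousOn k (Icc a b)) (hW : ContinuousOn W (Icc a b)) (hF : ContinuousOn F (Icc a b))
    (hG : ContinuousOn G (Icc a b)) (hH : ContinuousOn H (Icc a b))
    {A B F₀ G₀ H₀ K : E →L[ℂ] E} (c : ℂ)
    (hF₀ : F₀ = A + c • (B ∘L K) - ∫ ν in a..b, k ν • (W ν ∘L F ν))
    (hG₀ : G₀ = A - ∫ ν in a..b, k ν • (W ν ∘L G ν))
    (hH₀ : H₀ = B - ∫ ν in a..b, k ν • (W ν ∘L H ν)) :
    F₀ - G₀ - c • (H₀ ∘L K)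
      = -∫ ν in a..b, k ν • (W ν ∘L (F ν - G ν - c • (H ν ∘L K))) := by
  have hFG : ContinuousOn (fun ν => F ν - G ν) (Icc a b) := hF.sub hG
  have hHK : ContinuousOn (fun ν => c • (H ν ∘L K)) (Icc a b) :=
    (hH.clm_comp continuousOn_const).const_smul c
  rw [integral_smul_comp_sub (intervalIntegrable_smul_comp hab hk hW hFG)
      (intervalIntegrable_smul_comp hab hk hW hHK),
    integral_smul_comp_sub (intervalIntegrable_smul_comp hab hk hW hF)
      (intervalIntegrable_smul_comp hab hk hW hG),
    integral_smul_comp_smul_comp c K (intervalIntegrable_smul_comp hab hk hW hH),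
    hF₀, hG₀, hH₀, sub_comp, smul_sub]
  abel

end IntegralOperator

theorem continued_kernel_representation_general
    {𝕙 : Type*} [NormedAddCommGroup 𝕙] [InnerProductSpace ℂ 𝕙] [CompleteSpace 𝕙]
    (a b : ℝ) (hab : a < b)
    (Ω : Set ℂ)
    (hΩsub : ∀ x : ℝ, x ∈ Set.Icc a b → (x : ℂ) ∈ Ω)
    (ℓ : ℂ)
    (z : ℂ) (hzΩ : z ∈ Ω) (hzim : z.im ≠ 0)
    (μ : ℂ)
    (V T T' : ℂ → ℂ → (𝕙 →L[ℂ] 𝕙))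
    -- the scattering matrix `S_ℓ = I - 2πiℓ T(z,z)` is boundedly invertible, with inverse `Sinv`
    (Sinv : 𝕙 →L[ℂ] 𝕙)
    (hSl : Sinv * ((1 : 𝕙 →L[ℂ] 𝕙) - (2 * (Real.pi : ℂ) * Complex.I * ℓ) • T z z) = 1)
    -- continuity in `ν` on `[a,b]` of all the factors appearing in the integrands below
    (hVc : ∀ lam ∈ Ω, ContinuousOn (fun ν : ℝ => V lam (↑ν)) (Set.Icc a b))
    (hTμc : ContinuousOn (fun ν : ℝ => T (↑ν) μ) (Set.Icc a b))
    (hTzc : ContinuousOn (fun ν : ℝ => T (↑ν) z) (Set.Icc a b))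
    (hT'c : ContinuousOn (fun ν : ℝ => T' (↑ν) μ) (Set.Icc a b))
    -- (i) Lippmann–Schwinger equations on the physical sheet, for `c = μ` and `c = z`
    (hLSμ : ∀ lam ∈ Ω,
      T lam μ = V lam μ - ∫ ν in a..b, ((ν : ℂ) - z)⁻¹ • (V lam (↑ν) ∘L T (↑ν) μ))
    (hLSz : ∀ lam ∈ Ω,
      T lam z = V lam z - ∫ ν in a..b, ((ν : ℂ) - z)⁻¹ • (V lam (↑ν) ∘L T (↑ν) z))
    -- (ii) uniqueness for the homogeneous equation
    (huniq : ∀ X : ℝ → (𝕙 →L[ℂ] 𝕙), ContinuousOn X (Set.Icc a b) →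
      (∀ lam ∈ Set.Icc a b,
        X lam = -∫ ν in a..b, ((ν : ℂ) - z)⁻¹ • (V (↑lam) (↑ν) ∘L X ν)) →
      ∀ lam ∈ Set.Icc a b, X lam = 0)
    -- (iii) continued Lippmann–Schwinger equation on the unphysical sheet
    (hLS' : ∀ lam ∈ Ω,
      T' lam μ = V lam μ + (2 * (Real.pi : ℂ) * Complex.I * ℓ) • (V lam z ∘L T' z μ)
        - ∫ ν in a..b, ((ν : ℂ) - z)⁻¹ • (V lam (↑ν) ∘L T' (↑ν) μ)) :
    ∀ lam ∈ Ω,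
      T' lam μ = T lam μ
        + (2 * (Real.pi : ℂ) * Complex.I * ℓ) • (T lam z ∘L (Sinv ∘L T z μ)) := by
  set c : ℂ := 2 * (Real.pi : ℂ) * Complex.I * ℓ
  have hk := (continuous_inv_ofReal_sub hzim).continuousOn (s := Icc a b)
  have hres : ∀ lam ∈ Ω, T' lam μ - T lam μ - c • (T lam z ∘L T' z μ)
      = -∫ ν in a..b, ((ν : ℂ) - z)⁻¹ •
          (V lam ν ∘L (T' ν μ - T ν μ - c • (T ν z ∘L T' z μ))) := fun lam hlam =>
    sub_sub_smul_comp_eq_neg_integral hab.le hk (hVc lam hlam) hT'c hTμc hTzc c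
      (hLS' lam hlam) (hLSμ lam hlam) (hLSz lam hlam)
  have hres_zero := huniq (fun ν : ℝ => T' ν μ - T ν μ - c • (T ν z ∘L T' z μ))
    ((hT'c.sub hTμc).sub ((hTzc.clm_comp continuousOn_const).const_smul c))
    fun lam hlam => hres lam (hΩsub lam hlam)
  have hrep : ∀ lam ∈ Ω, T' lam μ = T lam μ + c • (T lam z ∘L T' z μ) := fun lam hlam => by
    have h := hres lam hlam
    rwa [integral_smul_comp_eq_zero hab.le hres_zero, neg_zero, sub_sub, sub_eq_zero] at h
  have hK : T' z μ = Sinv ∘L T z μ :=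
    eq_mul_of_eq_add_mul_of_mul_one_sub_eq_one hSl (by rw [smul_mul_assoc]; exact hrep z hzΩ)
  intro lam hlam
  rw [hrep lam hlam, hK]

/-- The representation formula of Proposition 2 (equation (16)):
`T'(λ,μ) = T(λ,μ) + 2πiℓ T(λ,z) S_ℓ⁻¹ T(z,μ)`, where `S_ℓ = I - 2πiℓ T(z,z)` is the
physical-sheet scattering matrix, assumed boundedly invertible with inverse `Sinv`. -/
theorem continued_kernel_representation
    {𝕙 : Type*} [NormedAddCommGroup 𝕙] [InnerProductSpace ℂ 𝕙] [CompleteSpace 𝕙]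
    (a b : ℝ) (hab : a < b)
    (Ω : Set ℂ) (hΩopen : IsOpen Ω)
    (hΩsub : ∀ x : ℝ, x ∈ Set.Icc a b → (x : ℂ) ∈ Ω)
    (ℓ : ℂ) (hℓ : ℓ = 1 ∨ ℓ = -1)
    (z : ℂ) (hzΩ : z ∈ Ω) (hzim : z.im ≠ 0)
    (μ : ℂ) (hμΩ : μ ∈ Ω)
    (V T T' : ℂ → ℂ → (𝕙 →L[ℂ] 𝕙))
    -- the scattering matrix `S_ℓ = I - 2πiℓ T(z,z)` is boundedly invertible, with inverse `Sinv`
    (Sinv : 𝕙 →L[ℂ] 𝕙)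
    (hSl : Sinv * ((1 : 𝕙 →L[ℂ] 𝕙) - (2 * (Real.pi : ℂ) * Complex.I * ℓ) • T z z) = 1)
    (hSr : ((1 : 𝕙 →L[ℂ] 𝕙) - (2 * (Real.pi : ℂ) * Complex.I * ℓ) • T z z) * Sinv = 1)
    -- continuity in `ν` on `[a,b]` of all the factors appearing in the integrands below
    (hVc : ∀ lam ∈ Ω, ContinuousOn (fun ν : ℝ => V lam (↑ν)) (Set.Icc a b))
    (hTμc : ContinuousOn (fun ν : ℝ => T (↑ν) μ) (Set.Icc a b))
    (hTzc : ContinuousOn (fun ν : ℝ => T (↑ν) z) (Set.Icc a b))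
    (hT'c : ContinuousOn (fun ν : ℝ => T' (↑ν) μ) (Set.Icc a b))
    -- (i) Lippmann–Schwinger equations on the physical sheet, for `c = μ` and `c = z`
    (hLSμ : ∀ lam ∈ Ω,
      T lam μ = V lam μ - ∫ ν in a..b, ((ν : ℂ) - z)⁻¹ • (V lam (↑ν) ∘L T (↑ν) μ))
    (hLSz : ∀ lam ∈ Ω,
      T lam z = V lam z - ∫ ν in a..b, ((ν : ℂ) - z)⁻¹ • (V lam (↑ν) ∘L T (↑ν) z))
    -- (ii) uniqueness for the homogeneous equation
    (huniq : ∀ X : ℝ → (𝕙 →L[ℂ] 𝕙), ContinuousOn X (Set.Icc a b) →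
      (∀ lam ∈ Set.Icc a b,
        X lam = -∫ ν in a..b, ((ν : ℂ) - z)⁻¹ • (V (↑lam) (↑ν) ∘L X ν)) →
      ∀ lam ∈ Set.Icc a b, X lam = 0)
    -- (iii) continued Lippmann–Schwinger equation on the unphysical sheet
    (hLS' : ∀ lam ∈ Ω,
      T' lam μ = V lam μ + (2 * (Real.pi : ℂ) * Complex.I * ℓ) • (V lam z ∘L T' z μ)
        - ∫ ν in a..b, ((ν : ℂ) - z)⁻¹ • (V lam (↑ν) ∘L T' (↑ν) μ)) :
    ∀ lam ∈ Ω,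
      T' lam μ = T lam μ
        + (2 * (Real.pi : ℂ) * Complex.I * ℓ) • (T lam z ∘L (Sinv ∘L T z μ)) :=
  continued_kernel_representation_general a b hab Ω hΩsub ℓ z hzΩ hzim μ V T T' Sinv hSl hVc hTμc
    hTzc hT'c hLSμ hLSz huniq hLS'
end

section
/- Let 𝔥 be a complex Hilbert space, a < b real, and V : ℝ × ℝ → B(𝔥) continuous on [a,b] × [a,b] such that for every λ, μ ∈ [a,b] the operator V(λ,μ) is a compact operator on 𝔥. Let 𝒱 be a bounded linear operator on H = L²((a,b), 𝔥) satisfying, for every f ∈ H, (𝒱 f)(λ) = ∫_a^b V(λ,μ) (f(μ)) dμ for almost every λ ∈ (a,b). Then 𝒱 is a compact operator on H. -/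
/-!
Uniform continuity of `V` on the compact square lets one replace `V λ μ` by its value at the
nearest points of a finite net, at a cost of at most `ε` in operator norm. The integral operator
of such a step kernel is a finite sum of operators `f ↦ 𝟙_A • K (∫_B f)` with `K` a value of `V`,
hence compact; and on a finite measure space a kernel bounded by `ε` defines an operator on `L²`
of norm at most `ε` times the total mass. Compact operators are closed in operator norm.
-/

open MeasureTheory ContinuousLinearMap Set

theorem IsCompact.exists_simpleFunc_mem_dist_lt {X : Type*} [PseudoMetricSpace X]
    [MeasurableSpace X] [OpensMeasurableSpace X] {s : Set X} (hs : IsCompact s)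
    (hne : s.Nonempty) {δ : ℝ} (hδ : 0 < δ) :
    ∃ r : SimpleFunc X X, (∀ x, r x ∈ s) ∧ ∀ x ∈ s, dist (r x) x < δ := by
  obtain ⟨t, hts, htfin, hcover⟩ := hs.finite_cover_balls hδ
  obtain ⟨x₀, hx₀⟩ := hne
  let L := htfin.toFinset.toList
  let e (k : ℕ) : X := if hk : k < L.length then L[k] else x₀
  have he : ∀ k, e k ∈ s := fun k => by
    unfold e
    split_ifs
    · exact hts (by simpa [L] using List.getElem_mem (l := L) ‹_›)
    · exact hx₀
  refine ⟨SimpleFunc.nearestPt e L.length, fun x => he _, fun x hx => ?_⟩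
  obtain ⟨z, hz, hxz⟩ := mem_iUnion₂.1 (hcover hx)
  obtain ⟨k, hk, rfl⟩ := List.mem_iff_getElem.1 (show z ∈ L by simpa [L] using hz)
  rw [← edist_lt_ofReal]
  refine (SimpleFunc.edist_nearestPt_le e x hk.le).trans_lt ?_
  rw [edist_lt_ofReal, dist_comm]
  simpa [e, hk] using hxz

namespace MeasureTheory

theorem Lp.integral_norm_le_mul_norm {α E : Type*} [MeasurableSpace α] {μ : Measure α}
    [IsFiniteMeasure μ] [NormedAddCommGroup E] (f : Lp E 2 μ) :
    ∫ x, ‖f x‖ ∂μ ≤ √(μ.real univ) * ‖f‖ := by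
  have h := eLpNorm_le_eLpNorm_mul_rpow_measure_univ (μ := μ) (p := 1) (q := 2) one_le_two
    (Lp.aestronglyMeasurable f)
  rw [integral_norm_eq_lintegral_enorm (Lp.aestronglyMeasurable f),
    ← eLpNorm_one_eq_lintegral_enorm, Lp.norm_def, measureReal_def, Real.sqrt_eq_rpow,
    ENNReal.toReal_rpow, ← ENNReal.toReal_mul, mul_comm]
  refine ENNReal.toReal_mono (by finiteness) (h.trans_eq ?_)
  norm_num

variable {α 𝕜 E F : Type*} [MeasurableSpace α] {μ : Measure α} [RCLike 𝕜]
  [NormedAddCommGroup E] [NormedSpace 𝕜 E] [NormedAddCommGroup F] [NormedSpace 𝕜 F]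

theorem Lp.integrable_clm_apply_of_ae_bound [IsFiniteMeasure μ] {k : α → E →L[𝕜] F} {C : ℝ}
    (hk : AEStronglyMeasurable k μ) (hkC : ∀ᵐ y ∂μ, ‖k y‖ ≤ C) (f : Lp E 2 μ) :
    Integrable (fun y => k y (f y)) μ :=
  (ContinuousLinearMap.id 𝕜 (E →L[𝕜] F)).integrable_of_bilin_of_bdd_left C hk hkC
    ((Lp.memLp f).integrable one_le_two)

section ProductKernel

variable [NormedSpace ℝ E] [SMulCommClass ℝ 𝕜 E] [CompleteSpace E]

noncomputable def productKernelOp (φ ψ : Lp 𝕜 2 μ) (K : E →L[𝕜] F) :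
    Lp E 2 μ →L[𝕜] Lp F 2 μ :=
  ((lsmul 𝕜 𝕜).flip.compLpL₂ 2 μ).flip φ ∘L K ∘L (lsmul 𝕜 𝕜).lpPairing μ 2 2 ψ

theorem isCompactOperator_productKernelOp (φ ψ : Lp 𝕜 2 μ) {K : E →L[𝕜] F}
    (hK : IsCompactOperator K) : IsCompactOperator (productKernelOp φ ψ K) := by
  rw [productKernelOp, coe_comp, coe_comp]
  exact (hK.comp_clm _).clm_comp _

end ProductKernel

variable [NormedSpace ℝ F]

def HasIntegralKernel (T : Lp E 2 μ →L[𝕜] Lp F 2 μ) (k : α → α → E →L[𝕜] F) : Prop :=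
  ∀ f : Lp E 2 μ, ∀ᵐ x ∂μ, Integrable (fun y => k x y (f y)) μ ∧ T f x = ∫ y, k x y (f y) ∂μ

namespace HasIntegralKernel

variable {T T' : Lp E 2 μ →L[𝕜] Lp F 2 μ} {k k' : α → α → E →L[𝕜] F}

theorem zero : HasIntegralKernel (0 : Lp E 2 μ →L[𝕜] Lp F 2 μ) 0 := fun f => by
  filter_upwards [Lp.coeFn_zero F 2 μ] with x hx
  exact ⟨by simp, by simpa using hx⟩

theorem add (hT : HasIntegralKernel T k) (hT' : HasIntegralKernel T' k') :
    HasIntegralKernel (T + T') (k + k') := fun f => by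
  filter_upwards [hT f, hT' f, Lp.coeFn_add (T f) (T' f)] with x ⟨hi, hx⟩ ⟨hi', hx'⟩ hadd
  simp only [add_apply, Pi.add_apply, hadd, hx, hx']
  exact ⟨hi.add hi', (integral_add hi hi').symm⟩

theorem sub (hT : HasIntegralKernel T k) (hT' : HasIntegralKernel T' k') :
    HasIntegralKernel (T - T') (k - k') := fun f => by
  filter_upwards [hT f, hT' f, Lp.coeFn_sub (T f) (T' f)] with x ⟨hi, hx⟩ ⟨hi', hx'⟩ hsub
  simp only [sub_apply, Pi.sub_apply, hsub, hx, hx']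
  exact ⟨hi.sub hi', (integral_sub hi hi').symm⟩

theorem sum {ι : Type*} (s : Finset ι) {T : ι → Lp E 2 μ →L[𝕜] Lp F 2 μ}
    {k : ι → α → α → E →L[𝕜] F} (h : ∀ i ∈ s, HasIntegralKernel (T i) (k i)) :
    HasIntegralKernel (∑ i ∈ s, T i) (∑ i ∈ s, k i) := by
  classical
  induction s using Finset.induction_on with
  | empty => simpa using zero
  | insert i s hi ih =>
    rw [Finset.sum_insert hi, Finset.sum_insert hi]
    exact (h i (Finset.mem_insert_self i s)).add
      (ih fun j hj => h j (Finset.mem_insert_of_mem hj))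

theorem congr (hT : HasIntegralKernel T k) (hk : ∀ᵐ x ∂μ, ∀ᵐ y ∂μ, k x y = k' x y) :
    HasIntegralKernel T k' := fun f => by
  filter_upwards [hT f, hk] with x ⟨hi, hx⟩ hkx
  have hkfx : (fun y => k x y (f y)) =ᵐ[μ] fun y => k' x y (f y) := by
    filter_upwards [hkx] with y hy
    rw [hy]
  exact ⟨hi.congr hkfx, hx.trans (integral_congr_ae hkfx)⟩

theorem opNorm_le [IsFiniteMeasure μ] (hT : HasIntegralKernel T k) {C : ℝ} (hC : 0 ≤ C)
    (hk : ∀ᵐ x ∂μ, ∀ᵐ y ∂μ, ‖k x y‖ ≤ C) : ‖T‖ ≤ C * μ.real univ := by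
  refine opNorm_le_bound _ (by positivity) fun f => ?_
  have hTf : ∀ᵐ x ∂μ, ‖T f x‖ ≤ C * ∫ y, ‖f y‖ ∂μ := by
    filter_upwards [hT f, hk] with x hx hkx
    rw [hx.2, ← integral_const_mul]
    refine norm_integral_le_of_norm_le (((Lp.memLp f).integrable one_le_two).norm.const_mul C) ?_
    filter_upwards [hkx] with y hy
    exact (le_opNorm _ _).trans (mul_le_mul_of_nonneg_right hy (norm_nonneg _))
  calc ‖T f‖ ≤ √(μ.real univ) * (C * ∫ y, ‖f y‖ ∂μ) := by
        simpa [Real.sqrt_eq_rpow, measureUnivNNReal, measureReal_def,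
          ENNReal.coe_toNNReal_eq_toReal] using Lp.norm_le_of_ae_bound (by positivity) hTf
    _ ≤ √(μ.real univ) * (C * (√(μ.real univ) * ‖f‖)) := by
        gcongr
        exact Lp.integral_norm_le_mul_norm f
    _ = C * μ.real univ * ‖f‖ := by
        linear_combination C * ‖f‖ * Real.mul_self_sqrt (measureReal_nonneg (s := univ) (μ := μ))

end HasIntegralKernel

variable [NormedSpace ℝ E] [SMulCommClass ℝ 𝕜 E] [CompleteSpace E] [SMulCommClass ℝ 𝕜 F]
  [CompleteSpace F]

theorem hasIntegralKernel_productKernelOp (φ ψ : Lp 𝕜 2 μ) (K : E →L[𝕜] F) :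
    HasIntegralKernel (productKernelOp φ ψ K) fun x y => φ x • ψ y • K := fun f => by
  have hψf : Integrable (fun y => ψ y • f y) μ :=
    memLp_one_iff_integrable.1 ((Lp.memLp f).smul (Lp.memLp ψ))
  have hKψf : ∫ y, ψ y • K (f y) ∂μ = K (∫ y, ψ y • f y ∂μ) := by
    simpa using K.integral_comp_comm hψf
  filter_upwards [coeFn_compLp (toSpanSingleton 𝕜 (K (∫ y, ψ y • f y ∂μ))) φ] with x hx
  refine ⟨by simpa [Pi.smul_def] using (K.integrable_comp hψf).smul (φ x), ?_⟩
  simp [productKernelOp, lpPairing_eq_integral, hx, integral_smul, hKψf]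

theorem exists_isCompactOperator_hasIntegralKernel_simpleFunc [IsFiniteMeasure μ]
    {β : Type*} (r : SimpleFunc α β) (K : β → β → E →L[𝕜] F)
    (hK : ∀ x y, IsCompactOperator (K (r x) (r y))) :
    ∃ T : Lp E 2 μ →L[𝕜] Lp F 2 μ,
      IsCompactOperator T ∧ HasIntegralKernel T fun x y => K (r x) (r y) := by
  classical
  let χ (p : β) : Lp 𝕜 2 μ :=
    indicatorConstLp 2 (r.measurableSet_fiber p) (measure_ne_top μ _) 1
  have hχ : ∀ᵐ x ∂μ, ∀ p ∈ r.range, χ p x = if r x = p then 1 else 0 := by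
    refine (Finset.eventually_all _).2 fun p _ => ?_
    filter_upwards [indicatorConstLp_coeFn (p := 2) (hs := r.measurableSet_fiber p)
      (hμs := measure_ne_top μ _) (c := (1 : 𝕜))] with x hx
    simp [χ, hx, Set.indicator]
  refine ⟨∑ pq ∈ r.range ×ˢ r.range, productKernelOp (χ pq.1) (χ pq.2) (K pq.1 pq.2), ?_, ?_⟩
  · refine (compactOperator (RingHom.id 𝕜) (Lp E 2 μ) (Lp F 2 μ)).sum_mem fun ⟨p, q⟩ hpq => ?_
    obtain ⟨⟨x, rfl⟩, ⟨y, rfl⟩⟩ := Finset.mem_product.1 hpq |>.imp r.mem_range.1 r.mem_range.1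
    exact isCompactOperator_productKernelOp _ _ (hK x y)
  · refine (HasIntegralKernel.sum _ fun pq _ => hasIntegralKernel_productKernelOp _ _ _).congr ?_
    filter_upwards [hχ] with x hx
    filter_upwards [hχ] with y hy
    simp only [Finset.sum_apply, Finset.sum_product]
    rw [Finset.sum_congr rfl fun p hp => Finset.sum_congr rfl fun q hq => by rw [hx p hp, hy q hq]]
    simp [ite_smul, Finset.sum_ite_eq, r.mem_range_self]

theorem HasIntegralKernel.isCompactOperator_of_approx_simpleFunc [IsFiniteMeasure μ]
    {T : Lp E 2 μ →L[𝕜] Lp F 2 μ} {k : α → α → E →L[𝕜] F} {β : Type*}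
    (hT : HasIntegralKernel T k)
    (happrox : ∀ ε > 0, ∃ (r : SimpleFunc α β) (K : β → β → E →L[𝕜] F),
      (∀ x y, IsCompactOperator (K (r x) (r y))) ∧
        ∀ᵐ x ∂μ, ∀ᵐ y ∂μ, ‖k x y - K (r x) (r y)‖ ≤ ε) :
    IsCompactOperator T := by
  refine isClosed_setOfPred_isCompactOperator.closure_subset
    (Metric.mem_closure_iff.2 fun ε hε => ?_)
  obtain ⟨r, K, hK, hkK⟩ := happrox (ε / (μ.real univ + 1)) (by positivity)
  obtain ⟨S, hS, hSK⟩ := exists_isCompactOperator_hasIntegralKernel_simpleFunc (μ := μ) r K hK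
  refine ⟨S, hS, ?_⟩
  calc dist T S ≤ ε / (μ.real univ + 1) * μ.real univ :=
        dist_eq_norm T S ▸ (hT.sub hSK).opNorm_le (by positivity) hkK
    _ < ε := by
        rw [div_mul_eq_mul_div, div_lt_iff₀ (by positivity)]
        exact mul_lt_mul_of_pos_left (lt_add_one _) hε

end MeasureTheory

/-- The Ladyzhenskaya–Faddeev compactness property: the integral operator
`(𝒱 f)(λ) = ∫_a^b V(λ,μ) f(μ) dμ` on `L²((a,b),𝕙)` with a continuous kernel whose values
`V(λ,μ)` are compact operators on `𝕙` is a compact operator on `L²((a,b),𝕙)`. -/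
theorem integral_operator_compact
    {𝕙 : Type*} [NormedAddCommGroup 𝕙] [InnerProductSpace ℂ 𝕙] [CompleteSpace 𝕙]
    (a b : ℝ) (hab : a < b)
    (V : ℝ → ℝ → (𝕙 →L[ℂ] 𝕙))
    (hVcont : ContinuousOn (fun p : ℝ × ℝ => V p.1 p.2) (Set.Icc a b ×ˢ Set.Icc a b))
    (hVcompact : ∀ x ∈ Set.Icc a b, ∀ y ∈ Set.Icc a b, IsCompactOperator ⇑(V x y))
    (𝒱 : Lp 𝕙 2 (volume.restrict (Set.Ioo a b)) →L[ℂ]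
         Lp 𝕙 2 (volume.restrict (Set.Ioo a b)))
    (hint : ∀ f : Lp 𝕙 2 (volume.restrict (Set.Ioo a b)),
      ∀ᵐ x ∂(volume.restrict (Set.Ioo a b)),
        (𝒱 f) x = ∫ y in a..b, (V x y) (f y)) :
    IsCompactOperator ⇑𝒱 := by
  have hsq : IsCompact (Icc a b ×ˢ Icc a b) := isCompact_Icc.prod isCompact_Icc
  have hIcc : ∀ᵐ x ∂(volume.restrict (Ioo a b)), x ∈ Icc a b :=
    ae_restrict_of_forall_mem measurableSet_Ioo fun _ hx => Ioo_subset_Icc_self hx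
  obtain ⟨M, hM⟩ := hsq.exists_bound_of_continuousOn hVcont
  have hV : HasIntegralKernel 𝒱 V := fun f => by
    filter_upwards [hint f, hIcc] with x hx hxI
    have hVx : ContinuousOn (V x) (Icc a b) :=
      hVcont.comp (continuousOn_const.prodMk continuousOn_id) fun y hy => ⟨hxI, hy⟩
    have hVx_meas : AEStronglyMeasurable (V x) (volume.restrict (Ioo a b)) :=
      (hVx.mono Ioo_subset_Icc_self).aestronglyMeasurable measurableSet_Ioo
    refine ⟨Lp.integrable_clm_apply_of_ae_bound hVx_meas
      (hIcc.mono fun y hy => hM (x, y) ⟨hxI, hy⟩) f, ?_⟩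
    rw [hx, intervalIntegral.integral_of_le hab.le, integral_Ioc_eq_integral_Ioo]
  refine hV.isCompactOperator_of_approx_simpleFunc (β := ℝ) fun ε hε => ?_
  obtain ⟨δ, hδ, hVδ⟩ :=
    Metric.uniformContinuousOn_iff.1 (hsq.uniformContinuousOn_of_continuous hVcont) ε hε
  obtain ⟨r, hrI, hr⟩ := isCompact_Icc.exists_simpleFunc_mem_dist_lt (nonempty_Icc.2 hab.le) hδ
  refine ⟨r, V, fun x y => hVcompact _ (hrI x) _ (hrI y), ?_⟩
  filter_upwards [hIcc] with x hx
  filter_upwards [hIcc] with y hy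
  rw [← dist_eq_norm]
  refine (hVδ (x, y) ⟨hx, hy⟩ (r x, r y) ⟨hrI x, hrI y⟩ ?_).le
  rw [Prod.dist_eq, dist_comm x, dist_comm y]
  exact max_lt (hr x hx) (hr y hy)
end
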